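/- arXiv:1805.09053 — 6 statements merged into one kernel-verified Lean document; each statement's English description precedes it below -/
import Mathlib

section
/- Let F be a field containing a primitive n-th root of unity ω, and let e_0,…,e_{n−1} be the rows of the associated n×n Fourier matrix. Fix integers k and i_0 with gcd(n,k) = 1, and fix 1 ≤ r ≤ n. Then the linear code C spanned by the r rows e_{i_0}, e_{i_0+k}, e_{i_0+2k}, …, e_{i_0+(r−1)k} (indices taken mod n) is an [n, r, n−r+1] MDS code: C has dimension r, and every nonzero codeword of C has Hamming weight at least n−r+1. -/
/-!
The codeword `∑ₜ cₜ e_{i₀+tk}` has `j`-th coordinate `ω^{i₀ j} · P(ζ^j)`, where `ζ = ω^k` and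
`P = ∑ₜ cₜ Xᵗ` has degree `< r`. Since `gcd(n, k) = 1`, `ζ` is again a primitive `n`-th root of
unity, so the points `ζ^j` are distinct and `P` vanishes at fewer than `r` of them: the rows span a
generalized Reed–Solomon code.
-/

open Polynomial Finset Function

namespace Polynomial

variable {ι R : Type*} [Fintype ι] [CommRing R] [IsDomain R] [DecidableEq R]

theorem card_filter_eval_eq_zero_le_natDegree {p : R[X]} (hp : p ≠ 0) {x : ι → R}
    (hx : Injective x) : #{i | p.eval (x i) = 0} ≤ p.natDegree :=
  calc #{i | p.eval (x i) = 0}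
      ≤ #p.roots.toFinset :=
        card_le_card_of_injOn x (fun i hi => by simpa [hp] using hi) hx.injOn
    _ ≤ Multiset.card p.roots := p.roots.toFinset_card_le
    _ ≤ p.natDegree := p.card_roots'

theorem card_lt_hammingNorm_add_of_mem_degreeLT {r : ℕ} {p : R[X]}
    (hp : p ∈ degreeLT R r) (hp0 : p ≠ 0) {x : ι → R} (hx : Injective x) {a : ι → R}
    (ha : ∀ i, a i ≠ 0) : Fintype.card ι < (hammingNorm fun i => a i * p.eval (x i)) + r := by
  have hdeg : p.natDegree < r := (natDegree_lt_iff_degree_lt hp0).mpr (mem_degreeLT.mp hp)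
  have hzeros := card_filter_eval_eq_zero_le_natDegree hp0 hx
  have hsplit := card_filter_add_card_filter_not (s := univ) (fun i => p.eval (x i) = 0)
  have hnorm : hammingNorm (fun i => a i * p.eval (x i)) = #{i | ¬p.eval (x i) = 0} := by
    simp only [hammingNorm, ne_eq, mul_eq_zero, ha, false_or]
  rw [card_univ] at hsplit
  omega

end Polynomial

theorem IsPrimitiveRoot.injective_pow_fin {M : Type*} [CommMonoid M] {ζ : M} {n : ℕ}
    (hζ : IsPrimitiveRoot ζ n) : Injective fun j : Fin n => ζ ^ (j : ℕ) :=
  fun i j hij => Fin.ext (hζ.pow_inj i.isLt j.isLt hij)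

theorem zpow_add_mul_mul_eq {G : Type*} [CommGroupWithZero G] {ω : G} (hω : ω ≠ 0)
    (i₀ k : ℤ) (t j : ℕ) : ω ^ ((i₀ + t * k) * j) = ω ^ (i₀ * j) * ((ω ^ k) ^ j) ^ t := by
  rw [← zpow_natCast, ← zpow_natCast, ← zpow_mul, ← zpow_mul, ← zpow_add₀ hω]
  ring_nf

theorem sum_mul_zpow_add_mul_mul_eq_eval {F : Type*} [Field F] {ω : F} (hω : ω ≠ 0)
    (i₀ k : ℤ) {r : ℕ} (c : Fin r → F) (j : ℕ) :
    ∑ t : Fin r, c t * ω ^ ((i₀ + t * k) * j) =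
      ω ^ (i₀ * j) * ((degreeLTEquiv F r).symm c : F[X]).eval ((ω ^ k) ^ j) := by
  rw [eval_eq_sum_degreeLTEquiv (Submodule.coe_mem _), Subtype.coe_eta,
    LinearEquiv.apply_symm_apply, mul_sum]
  refine sum_congr rfl fun t _ => ?_
  rw [zpow_add_mul_mul_eq hω]
  ring

theorem fourier_rows_arith_seq_mds_general
    {F : Type*} [Field F] [DecidableEq F] {n : ℕ}
    {ω : F} (hω : orderOf ω = n)
    (e : ℤ → Fin n → F)
    (he : ∀ (i : ℤ) (j : Fin n), e i j = ω ^ (i * (j.val : ℤ)))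
    (k i₀ : ℤ) (hk : Int.gcd (n : ℤ) k = 1)
    (r : ℕ) (hrn : r ≤ n)
    (C : Submodule F (Fin n → F))
    (hC : C = Submodule.span F (Set.range fun t : Fin r => e (i₀ + (t.val : ℤ) * k))) :
    Module.finrank F C = r ∧
      ∀ v ∈ C, v ≠ 0 → n - r + 1 ≤ hammingNorm v := by
  have hωn : IsPrimitiveRoot ω n := IsPrimitiveRoot.iff_orderOf.mpr hω
  have hζ : IsPrimitiveRoot (ω ^ k) n := hωn.zpow_of_gcd_eq_one k (by rwa [Int.gcd_comm])
  set φ := Fintype.linearCombination F fun t : Fin r => e (i₀ + (t.val : ℤ) * k)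
  have hCφ : C = LinearMap.range φ := by rw [hC, Fintype.range_linearCombination]
  have hweight : ∀ c ≠ 0, n < hammingNorm (φ c) + r := by
    intro c hc
    have hω0 (j : Fin n) : ω ≠ 0 := hωn.ne_zero j.pos.ne'
    have hφc : φ c = fun j =>
        ω ^ (i₀ * (j.val : ℤ)) * ((degreeLTEquiv F r).symm c : F[X]).eval ((ω ^ k) ^ j.val) := by
      ext j
      simp only [φ, Fintype.linearCombination_apply, Finset.sum_apply, Pi.smul_apply, he,
        smul_eq_mul]
      exact sum_mul_zpow_add_mul_mul_eq_eval (hω0 j) i₀ k c j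
    simpa only [hφc, Fintype.card_fin] using
      card_lt_hammingNorm_add_of_mem_degreeLT (Submodule.coe_mem ((degreeLTEquiv F r).symm c))
        (by simpa using hc) hζ.injective_pow_fin fun j => zpow_ne_zero _ (hω0 j)
  have hinj : Injective φ := by
    refine (injective_iff_map_eq_zero φ).mpr fun c hc0 => by_contra fun hc => ?_
    have := hweight c hc
    rw [hc0, hammingNorm_zero] at this
    omega
  refine ⟨by rw [hCφ, LinearMap.finrank_range_of_inj hinj, Module.finrank_fin_fun], ?_⟩
  rintro v hv hv0
  obtain ⟨c, rfl⟩ := hCφ ▸ hv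
  have := hweight c (by rintro rfl; exact hv0 (map_zero φ))
  omega

/-- A code generated by `r` rows of the Fourier matrix in arithmetic sequence with
difference `k`, `gcd(n,k) = 1`, is an `[n, r, n-r+1]` MDS code. -/
theorem fourier_rows_arith_seq_mds
    {F : Type*} [Field F] [DecidableEq F] {n : ℕ} (hn : 0 < n)
    {ω : F} (hω : orderOf ω = n)
    (e : ℤ → Fin n → F)
    (he : ∀ (i : ℤ) (j : Fin n), e i j = ω ^ (i * (j.val : ℤ)))
    (k i₀ : ℤ) (hk : Int.gcd (n : ℤ) k = 1)
    (r : ℕ) (hr1 : 1 ≤ r) (hrn : r ≤ n)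
    (C : Submodule F (Fin n → F))
    (hC : C = Submodule.span F (Set.range fun t : Fin r => e (i₀ + (t.val : ℤ) * k))) :
    Module.finrank F C = r ∧
      ∀ v ∈ C, v ≠ 0 → n - r + 1 ≤ hammingNorm v :=
  fourier_rows_arith_seq_mds_general hω e he k i₀ hk r hrn C hC
end

section
/- Let F be a field containing a primitive n-th root of unity ω, and let e_0,…,e_{n−1} be the rows of the associated n×n Fourier matrix. Fix 1 ≤ r ≤ n and an integer i_0. Then the linear code C spanned by the r consecutive rows e_{i_0}, e_{i_0+1}, …, e_{i_0+r−1} (indices taken mod n) is an [n, r, n−r+1] MDS code: C has dimension r, and every nonzero codeword of C has Hamming weight at least n−r+1. -/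
/-!
The codeword `∑ₜ cₜ e_{i₀+t}` has `j`-th coordinate `ω^{i₀ j} p(ω^j)`, where `p = ∑ₜ cₜ Xᵗ`
has degree `< r`: the code is a generalized Reed–Solomon code. Since the `n` points `ω^j` are
distinct, a nonzero `p` vanishes at no more than `r - 1` of them, which gives the weight bound;
applied to the zero codeword it also gives linear independence of the rows.
-/

open Polynomial

theorem hammingNorm_mul_left {ι R : Type*} [Fintype ι] [MulZeroClass R]
    [IsLeftCancelMulZero R] [DecidableEq R] {u : ι → R} (hu : ∀ i, u i ≠ 0) (y : ι → R) :
    hammingNorm (fun i => u i * y i) = hammingNorm y :=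
  hammingNorm_comp (fun i => (u i * ·)) (fun i => mul_right_injective₀ (hu i)) fun _ => mul_zero _

theorem Polynomial.card_sub_natDegree_le_hammingNorm_eval {ι R : Type*} [Fintype ι]
    [CommRing R] [IsDomain R] [DecidableEq R] {x : ι → R} (hx : Function.Injective x)
    {p : R[X]} (hp : p ≠ 0) :
    Fintype.card ι - p.natDegree ≤ hammingNorm fun i => p.eval (x i) := by
  set Z := Finset.univ.filter fun i => p.eval (x i) = 0
  have hZ : Z.card ≤ p.natDegree := by
    rw [← Finset.card_image_of_injective Z hx]
    refine card_le_degree_of_subset_roots fun a ha => ?_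
    obtain ⟨i, hi, rfl⟩ := Finset.mem_image.mp ha
    exact (mem_roots hp).mpr (Finset.mem_filter.mp hi).2
  have hsplit : Z.card + hammingNorm (fun i => p.eval (x i)) = Fintype.card ι :=
    (Finset.card_filter_add_card_filter_not _).trans Finset.card_univ
  omega

theorem Polynomial.eval_ofFn {R : Type*} [Semiring R] [DecidableEq R] {r : ℕ} (c : Fin r → R)
    (x : R) : (ofFn r c).eval x = ∑ t, c t * x ^ (t : ℕ) := by
  simp only [ofFn_eq_sum_monomial, eval_finsetSum, eval_monomial]

theorem Polynomial.natDegree_ofFn_lt {R : Type*} [Semiring R] [DecidableEq R] {r : ℕ}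
    {c : Fin r → R} (hc : ofFn r c ≠ 0) : (ofFn r c).natDegree < r :=
  ofFn_natDegree_lt (Nat.one_le_iff_ne_zero.mpr (ne_zero_of_ofFn_ne_zero hc)) c

theorem pow_injective_of_orderOf_eq {G : Type*} [Monoid G] {ω : G} {n : ℕ}
    (hω : orderOf ω = n) : Function.Injective fun j : Fin n => ω ^ (j : ℕ) := fun a b hab =>
  Fin.ext <| pow_injOn_Iio_orderOf (hω ▸ a.isLt : (a : ℕ) < orderOf ω) (hω ▸ b.isLt) hab

theorem ne_zero_of_orderOf_ne_zero {M : Type*} [MonoidWithZero M] [Nontrivial M] {ω : M}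
    (hω : orderOf ω ≠ 0) : ω ≠ 0 := by
  rintro rfl
  exact hω (orderOf_zero M)

def fourierRow {F : Type*} [DivisionRing F] (ω : F) (n : ℕ) (i : ℤ) (j : Fin n) : F :=
  ω ^ (i * (j : ℤ))

section FourierRow

variable {F : Type*} [Field F] {ω : F} {n : ℕ}

theorem ne_zero_of_orderOf_eq (hω : orderOf ω = n) (j : Fin n) : ω ≠ 0 :=
  ne_zero_of_orderOf_ne_zero (hω ▸ j.pos.ne')

theorem fourierRow_ne_zero (hω : orderOf ω = n) (i : ℤ) (j : Fin n) : fourierRow ω n i j ≠ 0 :=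
  zpow_ne_zero _ (ne_zero_of_orderOf_eq hω j)

theorem fourierRow_add_natCast (hω : orderOf ω = n) (i₀ : ℤ) (t : ℕ) (j : Fin n) :
    fourierRow ω n (i₀ + t) j = fourierRow ω n i₀ j * (ω ^ (j : ℕ)) ^ t := by
  rw [fourierRow, fourierRow, add_mul, zpow_add₀ (ne_zero_of_orderOf_eq hω j), ← pow_mul,
    mul_comm (j : ℕ), ← zpow_natCast]
  push_cast
  rfl

theorem sum_smul_fourierRow_add [DecidableEq F] (hω : orderOf ω = n) (i₀ : ℤ) {r : ℕ}
    (c : Fin r → F) :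
    ∑ t, c t • fourierRow ω n (i₀ + (t : ℕ)) =
      fun j => fourierRow ω n i₀ j * (ofFn r c).eval (ω ^ (j : ℕ)) := by
  funext j
  simp only [Finset.sum_apply, Pi.smul_apply, smul_eq_mul, fourierRow_add_natCast hω,
    eval_ofFn, Finset.mul_sum]
  exact Finset.sum_congr rfl fun t _ => by ring

theorem sub_add_one_le_hammingNorm_sum_smul_fourierRow_add [DecidableEq F]
    (hω : orderOf ω = n) (i₀ : ℤ) {r : ℕ} (hrn : r ≤ n) {c : Fin r → F} (hc : ofFn r c ≠ 0) :
    n - r + 1 ≤ hammingNorm (∑ t, c t • fourierRow ω n (i₀ + (t : ℕ))) := by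
  rw [sum_smul_fourierRow_add hω, hammingNorm_mul_left (fourierRow_ne_zero hω i₀)]
  have hdeg := natDegree_ofFn_lt hc
  have hbound := card_sub_natDegree_le_hammingNorm_eval (pow_injective_of_orderOf_eq hω) hc
  rw [Fintype.card_fin] at hbound
  omega

theorem linearIndependent_fourierRow_add (hω : orderOf ω = n) (i₀ : ℤ) {r : ℕ}
    (hrn : r ≤ n) : LinearIndependent F fun t : Fin r => fourierRow ω n (i₀ + (t : ℕ)) := by
  classical
  rw [Fintype.linearIndependent_iff]
  intro c hc0
  have hp : ofFn r c = 0 := by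
    by_contra hp
    have := sub_add_one_le_hammingNorm_sum_smul_fourierRow_add hω i₀ hrn hp
    rw [hc0, hammingNorm_zero] at this
    omega
  exact congrFun (injective_ofFn r (hp.trans (map_zero _).symm))

end FourierRow

theorem fourier_consecutive_rows_mds_general
    {F : Type*} [Field F] [DecidableEq F] {n : ℕ}
    {ω : F} (hω : orderOf ω = n)
    (e : ℤ → Fin n → F)
    (he : ∀ (i : ℤ) (j : Fin n), e i j = ω ^ (i * (j.val : ℤ)))
    (i₀ : ℤ) (r : ℕ) (hrn : r ≤ n)
    (C : Submodule F (Fin n → F))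
    (hC : C = Submodule.span F (Set.range fun t : Fin r => e (i₀ + (t.val : ℤ)))) :
    Module.finrank F C = r ∧
      ∀ v ∈ C, v ≠ 0 → n - r + 1 ≤ hammingNorm v := by
  obtain rfl : e = fourierRow ω n := funext fun i => funext (he i)
  subst hC
  refine ⟨?_, fun v hv hv0 => ?_⟩
  · rw [finrank_span_eq_card (linearIndependent_fourierRow_add hω i₀ hrn), Fintype.card_fin]
  · obtain ⟨c, rfl⟩ := (Submodule.mem_span_range_iff_exists_fun F).mp hv
    refine sub_add_one_le_hammingNorm_sum_smul_fourierRow_add hω i₀ hrn fun hp => hv0 ?_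
    rw [sum_smul_fourierRow_add hω, hp]
    funext j
    simp

/-- A code generated by `r` consecutive rows of the Fourier matrix is an
`[n, r, n-r+1]` MDS code. -/
theorem fourier_consecutive_rows_mds
    {F : Type*} [Field F] [DecidableEq F] {n : ℕ} (hn : 0 < n)
    {ω : F} (hω : orderOf ω = n)
    (e : ℤ → Fin n → F)
    (he : ∀ (i : ℤ) (j : Fin n), e i j = ω ^ (i * (j.val : ℤ)))
    (i₀ : ℤ) (r : ℕ) (hr1 : 1 ≤ r) (hrn : r ≤ n)
    (C : Submodule F (Fin n → F))
    (hC : C = Submodule.span F (Set.range fun t : Fin r => e (i₀ + (t.val : ℤ)))) :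
    Module.finrank F C = r ∧
      ∀ v ∈ C, v ≠ 0 → n - r + 1 ≤ hammingNorm v :=
  fourier_consecutive_rows_mds_general hω e he i₀ r hrn C hC
end

section
/- Let F be a field containing a primitive n-th root of unity ω, and let e_0,…,e_{n−1} be the rows of the associated n×n Fourier matrix. For every subset S ⊆ {0,1,…,n−1}, the code C spanned by the rows {e_i : i ∈ S} is never self-dual: C ≠ C^⊥ (with respect to the Euclidean inner product). -/
/-!
The row `e 0` is the all-ones vector: its square is `n ≠ 0`, and by the geometric sum
formula it is orthogonal to every other row. So if `0 ∈ S` then `e 0 ∈ C \ C^⊥`, and if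
`0 ∉ S` then `e 0 ∈ C^⊥ \ C`; in either case `C ≠ C^⊥`.
-/

open Finset Matrix

theorem IsPrimitiveRoot.sum_range_pow_mul_eq_zero {R : Type*} [CommRing R] [IsDomain R]
    {ζ : R} {n i : ℕ} (hζ : IsPrimitiveRoot ζ n) (hi : ¬ n ∣ i) :
    ∑ j ∈ range n, ζ ^ (i * j) = 0 := by
  have hne : ζ ^ i ≠ 1 := fun h => hi ((hζ.pow_eq_one_iff_dvd i).mp h)
  refine eq_zero_of_ne_zero_of_mul_left_eq_zero (sub_ne_zero_of_ne hne.symm) ?_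
  simp only [pow_mul]
  rw [mul_neg_geom_sum, ← pow_mul, mul_comm, pow_mul, hζ.pow_eq_one, one_pow, sub_self]

section Orthogonal

variable {ι R : Type*} [Fintype ι] [CommSemiring R]

theorem dotProduct_eq_zero_of_mem_span {s : Set (ι → R)} {u v : ι → R}
    (hs : ∀ w ∈ s, u ⬝ᵥ w = 0) (hv : v ∈ Submodule.span R s) : u ⬝ᵥ v = 0 :=
  Submodule.span_le (p := LinearMap.ker (dotProductBilin R R u)) |>.mpr hs hv

theorem coe_ne_orthogonal_of_dotProduct_self_ne_zero {C : Submodule R (ι → R)} {u : ι → R}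
    (hu : u ⬝ᵥ u ≠ 0) (hmem : u ∈ C ∨ ∀ v ∈ C, u ⬝ᵥ v = 0) :
    (C : Set (ι → R)) ≠ {w | ∀ v ∈ C, w ⬝ᵥ v = 0} := by
  intro h
  have hC : u ∈ C ↔ ∀ v ∈ C, u ⬝ᵥ v = 0 := Set.ext_iff.mp h u
  have hu' : u ∈ C := hmem.elim id hC.mpr
  exact hu (hC.mp hu' u hu')

end Orthogonal

/-- No code generated by a set of rows of the Fourier matrix is self-dual with respect
to the Euclidean inner product. -/
theorem fourier_code_never_self_dual
    {F : Type*} [Field F] {n : ℕ} (hn : 0 < n)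
    {ω : F} (hω : orderOf ω = n)
    (e : Fin n → Fin n → F)
    (he : ∀ i j : Fin n, e i j = ω ^ (i.val * j.val))
    (S : Set (Fin n))
    (C : Submodule F (Fin n → F))
    (hC : C = Submodule.span F (e '' S)) :
    (C : Set (Fin n → F)) ≠ {u : Fin n → F | ∀ v ∈ C, (∑ x, u x * v x) = 0} := by
  have : NeZero n := ⟨hn.ne'⟩
  have hprim : IsPrimitiveRoot ω n := hω ▸ IsPrimitiveRoot.orderOf ω
  have he0 : e 0 = 1 := funext fun j => by simp [he]
  have horth (i : Fin n) (hi : i ≠ 0) : e 0 ⬝ᵥ e i = 0 := by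
    have hi' : ¬ n ∣ i.val := fun hd => hi (Fin.ext (Nat.eq_zero_of_dvd_of_lt hd i.isLt))
    rw [he0, one_dotProduct]
    simpa [he, Fin.sum_univ_eq_sum_range (fun j => ω ^ (i.val * j))]
      using hprim.sum_range_pow_mul_eq_zero hi'
  subst hC
  refine coe_ne_orthogonal_of_dotProduct_self_ne_zero (u := e 0) ?_ ?_
  · simpa [he0, one_dotProduct_one] using hprim.neZero'.out
  · by_cases h0 : (0 : Fin n) ∈ S
    · exact .inl (Submodule.subset_span ⟨0, h0, rfl⟩)
    · refine .inr fun v hv => dotProduct_eq_zero_of_mem_span ?_ hv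
      rintro _ ⟨i, hi, rfl⟩
      exact horth i (ne_of_mem_of_not_mem hi h0)
end

section
/- Let q be a prime power, let F be a finite field with q^2 elements, and let ω ∈ F be a primitive n-th root of unity with rows e_0,…,e_{n−1} of the associated n×n Fourier matrix. A row e_i satisfies <e_i, e_i>_H ≠ 0 if and only if n divides i(q+1). In particular, when n = q^2 − 1, the rows e_i with <e_i, e_i>_H ≠ 0 (the non-self-dual rows) are exactly those with index i a multiple of q−1, i.e. e_0, e_{q−1}, e_{2(q−1)}, …, e_{q(q−1)}. -/
/-!
The self-inner product of the row `e_i` is the geometric sum `∑_{t<n} x^t` with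
`x = ω^{i(q+1)}`, an `n`-th root of unity. Multiplying by `x - 1` shows the sum vanishes
unless `x = 1`, in which case it equals `n`; this is nonzero in `F`, since a field containing a
primitive `n`-th root of unity has characteristic prime to `n`.
For `n = q² - 1 = (q - 1)(q + 1)`, cancelling `q + 1` gives the second claim.
-/

open Finset

theorem geom_sum_ne_zero_iff_eq_one {R : Type*} [Ring R] [NoZeroDivisors R] {x : R} {n : ℕ}
    (hx : x ^ n = 1) (hn : (n : R) ≠ 0) : ∑ t ∈ range n, x ^ t ≠ 0 ↔ x = 1 := by
  refine ⟨fun hsum => ?_, fun h => by simpa [h] using hn⟩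
  have hmul : (∑ t ∈ range n, x ^ t) * (x - 1) = 0 := by rw [geom_sum_mul, hx, sub_self]
  exact sub_eq_zero.mp ((mul_eq_zero.mp hmul).resolve_left hsum)

theorem IsPrimitiveRoot.geom_sum_pow_ne_zero_iff {R : Type*} [CommRing R] [IsDomain R] {ζ : R}
    {n : ℕ} [NeZero n] (hζ : IsPrimitiveRoot ζ n) (k : ℕ) :
    ∑ t ∈ range n, (ζ ^ k) ^ t ≠ 0 ↔ n ∣ k := by
  have hpow : (ζ ^ k) ^ n = 1 := by rw [← pow_mul, mul_comm, pow_mul, hζ.pow_eq_one, one_pow]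
  rw [geom_sum_ne_zero_iff_eq_one hpow hζ.neZero'.out, hζ.pow_eq_one_iff_dvd]

theorem Nat.sq_sub_one_dvd_mul_add_one_iff {q m : ℕ} : q ^ 2 - 1 ∣ m * (q + 1) ↔ q - 1 ∣ m := by
  rw [show q ^ 2 - 1 = (q - 1) * (q + 1) by simpa [mul_comm] using Nat.sq_sub_sq q 1,
    Nat.mul_dvd_mul_iff_right q.succ_pos]

theorem fourier_rows_hermitian_non_self_dual_general
    {q : ℕ}
    {F : Type*} [Field F]
    {n : ℕ} {ω : F} (hω : orderOf ω = n)
    (e : Fin n → Fin n → F)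
    (he : ∀ i j : Fin n, e i j = ω ^ (i.val * j.val)) :
    (∀ i : Fin n, (∑ t, e i t * (e i t) ^ q) ≠ 0 ↔ n ∣ i.val * (q + 1)) ∧
      (n = q ^ 2 - 1 →
        ∀ i : Fin n, (∑ t, e i t * (e i t) ^ q) ≠ 0 ↔ (q - 1) ∣ i.val) := by
  have hprim : IsPrimitiveRoot ω n := hω ▸ IsPrimitiveRoot.orderOf ω
  have hrow : ∀ i : Fin n, (∑ t, e i t * (e i t) ^ q) ≠ 0 ↔ n ∣ i.val * (q + 1) := by
    intro i
    have : NeZero n := ⟨i.pos.ne'⟩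
    have hsum : ∑ t, e i t * (e i t) ^ q = ∑ t ∈ range n, (ω ^ (i.val * (q + 1))) ^ t := by
      rw [← Fin.sum_univ_eq_sum_range]
      refine sum_congr rfl fun t _ => ?_
      rw [he, ← pow_succ', ← pow_mul, ← pow_mul, mul_right_comm]
    rw [hsum, hprim.geom_sum_pow_ne_zero_iff]
  refine ⟨hrow, fun hnq i => (hrow i).trans ?_⟩
  rw [← Nat.sq_sub_one_dvd_mul_add_one_iff, ← hnq]

/-- Over `GF(q²)`, a Fourier matrix row `e_i` satisfies `⟨e_i, e_i⟩_H ≠ 0` iff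
`n ∣ i(q+1)`; in particular when `n = q² - 1` the non-self-dual rows are exactly those
whose index is a multiple of `q - 1`. -/
theorem fourier_rows_hermitian_non_self_dual
    {q : ℕ} (hq : IsPrimePow q)
    {F : Type*} [Field F] [Fintype F] (hF : Fintype.card F = q ^ 2)
    {n : ℕ} (hn : 0 < n) {ω : F} (hω : orderOf ω = n)
    (e : Fin n → Fin n → F)
    (he : ∀ i j : Fin n, e i j = ω ^ (i.val * j.val)) :
    (∀ i : Fin n, (∑ t, e i t * (e i t) ^ q) ≠ 0 ↔ n ∣ i.val * (q + 1)) ∧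
      (n = q ^ 2 - 1 →
        ∀ i : Fin n, (∑ t, e i t * (e i t) ^ q) ≠ 0 ↔ (q - 1) ∣ i.val) :=
  fourier_rows_hermitian_non_self_dual_general hω e he
end

section
/- Let q be a prime power, let F be a finite field with q^2 elements, and let ω ∈ F be a primitive n-th root of unity with rows e_0,…,e_{n−1} of the associated n×n Fourier matrix. Let S ⊆ {0,…,n−1} and let C be the code spanned by {e_i : i ∈ S}. If C contains its Hermitian dual (C^{⊥H} ⊆ C), then every index i ∈ {0,…,n−1} with i(q+1) ≡ 0 (mod n) belongs to S; that is, none of the non-self-dual rows can be left out of a Hermitian dual-containing code. -/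
/-!
Suppose `i ∉ S` although `n ∣ i(q+1)`. For every `b`, `⟨e_i, e_b⟩_H = ∑_x ω^((i+qb)x)`, which
vanishes unless `n ∣ i + qb`. Since `q² ≡ 1 (mod n)`, the map `b ↦ i + qb` is injective modulo `n`
and vanishes at `b = i`, so `e_i` is Hermitian-orthogonal to every generator of `C`, hence to `C`
(the form is semilinear in its second argument, `x ↦ x^q` being a power of Frobenius).
Thus `e_i ∈ C^⊥H ⊆ C`, so `⟨e_i, e_i⟩_H = 0`; but this sum is `n`, which is nonzero in `F`
because `n ∣ |F| - 1`.
-/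

open Finset

section SemilinearPairing

variable {R ι : Type*} [CommSemiring R] [Fintype ι]

def semilinearPairing (σ : R →+* R) (u : ι → R) : (ι → R) →ₛₗ[σ] R where
  toFun v := ∑ x, u x * σ (v x)
  map_add' v w := by simp only [Pi.add_apply, map_add, mul_add, sum_add_distrib]
  map_smul' c v := by simp only [Pi.smul_apply, smul_eq_mul, map_mul, mul_sum, mul_left_comm]

theorem sum_mul_map_eq_zero_of_mem_span {σ : R →+* R} {u : ι → R} {s : Set (ι → R)}
    (h : ∀ v ∈ s, ∑ x, u x * σ (v x) = 0) {v : ι → R} (hv : v ∈ Submodule.span R s) :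
    ∑ x, u x * σ (v x) = 0 :=
  Submodule.span_le (p := LinearMap.ker (semilinearPairing σ u)) |>.mpr h hv

end SemilinearPairing

theorem sum_pow_mul_eq_ite {R : Type*} [CommRing R] [IsDomain R] {ω : R} {n : ℕ}
    (hω : orderOf ω = n) (m : ℕ) :
    ∑ x : Fin n, ω ^ (m * x) = if n ∣ m then (n : R) else 0 := by
  subst hω
  simp_rw [pow_mul]
  split_ifs with hm
  · simp [orderOf_dvd_iff_pow_eq_one.mp hm]
  · have hζ : ω ^ m ≠ 1 := fun h => hm (orderOf_dvd_of_pow_eq_one h)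
    have hgeom := geom_sum_mul (ω ^ m) (orderOf ω)
    rw [pow_right_comm, pow_orderOf_eq_one, one_pow, sub_self] at hgeom
    rw [Fin.sum_univ_eq_sum_range (fun x => (ω ^ m) ^ x)]
    exact (mul_eq_zero.mp hgeom).resolve_right (sub_ne_zero.mpr hζ)

theorem sum_pow_mul_mul_pow_pow_eq_ite {R : Type*} [CommRing R] [IsDomain R] {ω : R} {n : ℕ}
    (hω : orderOf ω = n) (a b q : ℕ) :
    ∑ x : Fin n, ω ^ (a * x) * (ω ^ (b * x)) ^ q = if n ∣ a + q * b then (n : R) else 0 := by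
  rw [← sum_pow_mul_eq_ite hω]
  congr! 1 with x
  ring

theorem exists_ringHom_pow_eq_of_card_eq_pow {R : Type*} [CommRing R] [IsDomain R] [Fintype R]
    {q m : ℕ} (hq : IsPrimePow q) (hR : Fintype.card R = q ^ m) :
    ∃ φ : R →+* R, ∀ x, φ x = x ^ q := by
  obtain ⟨p, k, hp, -, rfl⟩ := hq
  have := Fact.mk hp.nat_prime
  have : CharP R p := charP_of_card_eq_prime_pow (f := k * m) (by rw [hR, pow_mul])
  exact ⟨iterateFrobenius R p k, fun x => iterateFrobenius_def p k x⟩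

theorem FiniteField.card_modEq_one_orderOf {F : Type*} [Field F] [Fintype F] {x : F}
    (hx : 0 < orderOf x) : Fintype.card F ≡ 1 [MOD orderOf x] :=
  (orderOf_pos_iff.mp hx).pow_eq_pow_iff_modEq.mp (by rw [FiniteField.pow_card, pow_one])

theorem natCast_ne_zero_of_card_modEq_one {R : Type*} [Ring R] [Fintype R] [Nontrivial R] {n : ℕ}
    (h : Fintype.card R ≡ 1 [MOD n]) : (n : R) ≠ 0 := fun hn => by
  have := (CharP.natCast_eq_natCast R (ringChar R)).mpr (h.of_dvd (ringChar.dvd hn))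
  simp [Nat.cast_card_eq_zero] at this

theorem Fin.eq_of_dvd_add_mul {n q : ℕ} (hq : q ^ 2 ≡ 1 [MOD n]) {i b : Fin n}
    (hi : n ∣ i * (q + 1)) (hb : n ∣ i + q * b) : b = i := by
  have hq' : (q : ZMod n) ^ 2 = 1 := by
    exact_mod_cast (ZMod.natCast_eq_natCast_iff _ _ _).mpr hq
  have hi' : ((i : ℕ) : ZMod n) * (q + 1) = 0 := by
    exact_mod_cast (ZMod.natCast_eq_zero_iff _ _).mpr hi
  have hb' : ((i : ℕ) : ZMod n) + q * (b : ℕ) = 0 := by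
    exact_mod_cast (ZMod.natCast_eq_zero_iff _ _).mpr hb
  have hbi : ((b : ℕ) : ZMod n) = (i : ℕ) := by
    linear_combination (q : ZMod n) * hb' - (q : ZMod n) * hi' +
      ((i : ℕ) - (b : ℕ) : ZMod n) * hq'
  ext
  rw [← ZMod.val_cast_of_lt b.isLt, ← ZMod.val_cast_of_lt i.isLt, hbi]

theorem fourier_hermitian_dual_containing_mandatory_rows_general
    {q : ℕ} (hq : IsPrimePow q)
    {F : Type*} [Field F] [Fintype F] (hF : Fintype.card F = q ^ 2)
    {n : ℕ} {ω : F} (hω : orderOf ω = n)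
    (e : Fin n → Fin n → F)
    (he : ∀ i j : Fin n, e i j = ω ^ (i.val * j.val))
    (S : Set (Fin n))
    (C : Submodule F (Fin n → F))
    (hC : C = Submodule.span F (e '' S))
    (hdual : {u : Fin n → F | ∀ v ∈ C, (∑ x, u x * (v x) ^ q) = 0}
      ⊆ (C : Set (Fin n → F))) :
    ∀ i : Fin n, (i.val * (q + 1)) % n = 0 → i ∈ S := by
  intro i hi
  by_contra hiS
  obtain ⟨φ, hφ⟩ := exists_ringHom_pow_eq_of_card_eq_pow hq hF
  have hcard : Fintype.card F ≡ 1 [MOD n] := hω ▸ FiniteField.card_modEq_one_orderOf (hω ▸ i.pos)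
  have hinner (b : Fin n) : ∑ x, e i x * e b x ^ q = if n ∣ i + q * b then (n : F) else 0 := by
    simp only [he]
    exact sum_pow_mul_mul_pow_pow_eq_ite hω _ _ _
  have hgen : ∀ v ∈ e '' S, ∑ x, e i x * φ (v x) = 0 := by
    rintro _ ⟨b, hb, rfl⟩
    have hbi : ¬ n ∣ i + q * b := fun h =>
      hiS (Fin.eq_of_dvd_add_mul (hF ▸ hcard) (Nat.dvd_of_mod_eq_zero hi) h ▸ hb)
    simp only [hφ, hinner, if_neg hbi]
  have horth : ∀ v ∈ C, ∑ x, e i x * v x ^ q = 0 := fun v hv => by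
    simpa only [hφ] using sum_mul_map_eq_zero_of_mem_span hgen (hC ▸ hv)
  have hself := horth (e i) (hdual horth)
  rw [hinner, if_pos (by convert Nat.dvd_of_mod_eq_zero hi using 1; ring)] at hself
  exact natCast_ne_zero_of_card_modEq_one hcard hself

/-- Over `GF(q²)`, if the code generated by the rows `{e_i : i ∈ S}` of the Fourier
matrix contains its Hermitian dual, then every index `i` with `i(q+1) ≡ 0 (mod n)`
(i.e. every non-self-dual row) belongs to `S`. -/
theorem fourier_hermitian_dual_containing_mandatory_rows
    {q : ℕ} (hq : IsPrimePow q)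
    {F : Type*} [Field F] [Fintype F] (hF : Fintype.card F = q ^ 2)
    {n : ℕ} (hn : 0 < n) {ω : F} (hω : orderOf ω = n)
    (e : Fin n → Fin n → F)
    (he : ∀ i j : Fin n, e i j = ω ^ (i.val * j.val))
    (S : Set (Fin n))
    (C : Submodule F (Fin n → F))
    (hC : C = Submodule.span F (e '' S))
    (hdual : {u : Fin n → F | ∀ v ∈ C, (∑ x, u x * (v x) ^ q) = 0}
      ⊆ (C : Set (Fin n → F))) :
    ∀ i : Fin n, (i.val * (q + 1)) % n = 0 → i ∈ S :=
  fourier_hermitian_dual_containing_mandatory_rows_general hq hF hω e he S C hC hdual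
end

section
/- Let q be a prime power, let F be a finite field with q^2 elements, let n = q^2 − 1, and let ω ∈ F be a primitive n-th root of unity (i.e. a generator of the multiplicative group of F), with rows e_0,…,e_{n−1} of the associated n×n Fourier matrix. Let C be the code spanned by the consecutive rows e_0, e_1, …, e_{q(q−1)}. Then C contains its Hermitian dual (C^{⊥H} ⊆ C), C has dimension q^2 − q + 1, and every nonzero codeword of C has Hamming weight at least q − 1; that is, C is a Hermitian dual-containing [q^2−1, q^2−q+1, q−1] MDS code. -/
/-!
Viewing the row `e_i` as the evaluation of `X ^ i` at `ω ^ 0, …, ω ^ (n - 1)`, the code is the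
Reed–Solomon code of polynomials of degree `≤ k := q(q - 1)`. A nonzero such polynomial has at
most `k` roots among these `n` distinct points, which gives both the dimension `k + 1` and the
weight bound `n - k = q - 1`. For dual containment, expand `u` in the full Fourier basis as the
evaluation of some `f` of degree `< n`. Orthogonality of characters shows that pairing `u` with
`ω ^ (s x)` extracts `n • f.coeff m` where `m ≡ -s (mod n)`. Since `q² ≡ 1 (mod n)`, the `q`-th
power of the row `e_(tq)` is `ω ^ (t x)`, so Hermitian orthogonality to `e_(tq)`, `1 ≤ t ≤ q - 2`,
kills the coefficient of `X ^ (n - t)`; as `n = -1 ≠ 0` in `F`, `f` has degree `≤ k`.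
-/

open Polynomial Finset

lemma Polynomial.natDegree_lt_of_mem_degreeLT {R : Type*} [Semiring R] {N : ℕ} {f : R[X]}
    (hf : f ∈ R[X]_N) (hf0 : f ≠ 0) : f.natDegree < N :=
  (natDegree_lt_iff_degree_lt hf0).mpr (mem_degreeLT.mp hf)

lemma Nat.sq_eq_mul_sub_one_add (q : ℕ) : q ^ 2 = q * (q - 1) + q := by
  cases q <;> simp [pow_two, Nat.mul_succ]

section

variable {F : Type*} [Field F] {n : ℕ} {ω : F}

noncomputable def evalPowers (ω : F) (n : ℕ) : F[X] →ₗ[F] Fin n → F :=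
  LinearMap.pi fun x => leval (ω ^ (x : ℕ))

@[simp]
lemma evalPowers_apply (f : F[X]) (x : Fin n) : evalPowers ω n f x = f.eval (ω ^ (x : ℕ)) := rfl

lemma map_evalPowers_degreeLT (N : ℕ) :
    (F[X]_N).map (evalPowers ω n) =
      Submodule.span F (Set.range fun s : Fin N => fun x : Fin n => ω ^ (s.val * x.val)) := by
  classical
  rw [degreeLT_eq_span_X_pow, Submodule.map_span]
  congr 1
  ext v
  simp [funext_iff, ← pow_mul, mul_comm, Fin.exists_iff]

lemma card_filter_eval_pow_eq_zero_le [DecidableEq F] (hω : orderOf ω = n) {f : F[X]}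
    (hf : f ≠ 0) :
    #{x : Fin n | f.eval (ω ^ (x : ℕ)) = 0} ≤ f.natDegree := by
  have hinj : Set.InjOn (fun x : Fin n => ω ^ (x : ℕ)) Set.univ := fun a _ b _ hab =>
    Fin.ext (pow_injOn_Iio_orderOf (by simp [hω]) (by simp [hω]) hab)
  rw [← card_image_of_injOn (hinj.mono (Set.subset_univ _))]
  refine card_le_degree_of_subset_roots fun y hy => ?_
  obtain ⟨x, hx, rfl⟩ := mem_image.mp (Finset.mem_val.mp hy)
  exact (mem_roots hf).mpr (mem_filter.mp hx).2

lemma sub_natDegree_le_hammingNorm_evalPowers [DecidableEq F] (hω : orderOf ω = n) {f : F[X]}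
    (hf : f ≠ 0) : n - f.natDegree ≤ hammingNorm (evalPowers ω n f) := by
  have hsplit := card_filter_add_card_filter_not (s := univ)
    (fun x : Fin n => f.eval (ω ^ (x : ℕ)) = 0)
  have hzeros := card_filter_eval_pow_eq_zero_le hω hf
  simp only [card_univ, Fintype.card_fin] at hsplit
  have hnonzeros : n - f.natDegree ≤ #{x : Fin n | ¬ f.eval (ω ^ (x : ℕ)) = 0} := by omega
  convert hnonzeros using 1
  simp only [hammingNorm, evalPowers_apply, ne_eq]
  congr

lemma injective_evalPowers_domRestrict_degreeLT (hω : orderOf ω = n) {N : ℕ} (hN : N ≤ n) :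
    Function.Injective ((evalPowers ω n).domRestrict (F[X]_N)) := by
  classical
  refine (injective_iff_map_eq_zero _).mpr fun ⟨f, hf⟩ hf0 => ?_
  by_contra hne
  have hf' : f ≠ 0 := fun h => hne (Subtype.ext h)
  have hdeg := natDegree_lt_of_mem_degreeLT hf hf'
  have hweight := sub_natDegree_le_hammingNorm_evalPowers hω hf'
  rw [show evalPowers ω n f = 0 from hf0, hammingNorm_zero] at hweight
  omega

lemma finrank_map_evalPowers_degreeLT (hω : orderOf ω = n) {N : ℕ} (hN : N ≤ n) :
    Module.finrank F ((F[X]_N).map (evalPowers ω n)) = N := by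
  rw [← LinearMap.range_domRestrict,
    LinearMap.finrank_range_of_inj (injective_evalPowers_domRestrict_degreeLT hω hN),
    (degreeLTEquiv F N).finrank_eq, Module.finrank_fin_fun]

lemma map_evalPowers_degreeLT_eq_top (hω : orderOf ω = n) :
    (F[X]_n).map (evalPowers ω n) = ⊤ :=
  Submodule.eq_top_of_finrank_eq <| by
    rw [finrank_map_evalPowers_degreeLT hω le_rfl, Module.finrank_fin_fun]

lemma sum_range_pow_mul (hω : orderOf ω = n) (s : ℕ) :
    ∑ x ∈ range n, ω ^ (s * x) = if n ∣ s then (n : F) else 0 := by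
  simp_rw [pow_mul]
  split_ifs with h
  · simp [orderOf_dvd_iff_pow_eq_one.mp (hω ▸ h)]
  · have hne : ω ^ s ≠ 1 := fun h1 => h (hω ▸ orderOf_dvd_of_pow_eq_one h1)
    rw [geom_sum_eq hne, ← pow_mul, mul_comm, pow_mul, ← hω, pow_orderOf_eq_one, one_pow,
      sub_self, zero_div]

lemma sum_evalPowers_mul_pow (hω : orderOf ω = n) {f : F[X]} (hf : f ∈ F[X]_n) {m s : ℕ}
    (hm : m < n) (hms : n ∣ m + s) :
    ∑ x : Fin n, evalPowers ω n f x * ω ^ (s * x) = n * f.coeff m := by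
  have hdeg : f.natDegree < n := by
    rcases eq_or_ne f 0 with rfl | hf0
    · exact hm.trans_le' (Nat.zero_le _)
    · exact natDegree_lt_of_mem_degreeLT hf hf0
  have hchar (j : ℕ) (hj : j ∈ range n) : n ∣ j + s ↔ j = m := by
    refine ⟨fun h => ?_, fun h => h ▸ hms⟩
    refine Nat.ModEq.eq_of_lt_of_lt (Nat.ModEq.add_right_cancel' s ?_) (mem_range.mp hj) hm
    exact (Nat.modEq_zero_iff_dvd.mpr h).trans (Nat.modEq_zero_iff_dvd.mpr hms).symm
  calc ∑ x : Fin n, evalPowers ω n f x * ω ^ (s * x)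
      = ∑ x ∈ range n, ∑ j ∈ range n, f.coeff j * ω ^ ((j + s) * x) := by
        simp only [evalPowers_apply]
        rw [Fin.sum_univ_eq_sum_range (fun x => f.eval (ω ^ x) * ω ^ (s * x))]
        simp_rw [eval_eq_sum_range' hdeg, sum_mul, mul_assoc, ← pow_mul, ← pow_add, add_mul,
          mul_comm]
    _ = ∑ j ∈ range n, f.coeff j * if n ∣ j + s then (n : F) else 0 := by
        rw [sum_comm]
        simp_rw [← mul_sum, sum_range_pow_mul hω]
    _ = ∑ j ∈ range n, if j = m then f.coeff j * n else 0 := by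
        simp_rw [mul_ite, mul_zero]
        exact sum_congr rfl fun j hj => if_congr (hchar j hj) rfl rfl
    _ = n * f.coeff m := by rw [sum_ite_eq', if_pos (mem_range.mpr hm), mul_comm]

lemma mem_map_evalPowers_of_hermitian_orthogonal {q : ℕ} [Fintype F]
    (hF : Fintype.card F = q ^ 2) (hn : n + 1 = q ^ 2) (hω : orderOf ω = n) {u : Fin n → F}
    (hu : ∀ i ≤ q * (q - 1), ∑ x, u x * (ω ^ (i * x.val)) ^ q = 0) :
    u ∈ (F[X]_(q * (q - 1) + 1)).map (evalPowers ω n) := by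
  have hnF : (n : F) = -1 := by
    rw [eq_neg_iff_add_eq_zero, ← Nat.cast_add_one, hn, ← hF, Nat.cast_card_eq_zero]
  obtain ⟨f, hf, hfu⟩ : u ∈ (F[X]_n).map (evalPowers ω n) := by
    rw [map_evalPowers_degreeLT_eq_top hω]; trivial
  refine Submodule.mem_map.mpr ⟨f, ?_, hfu⟩
  rw [mem_degreeLT, degree_lt_iff_coeff_zero]
  intro m hm
  rcases lt_or_ge m n with hmn | hnm
  · set t := n - m
    have hqq := Nat.sq_eq_mul_sub_one_add q
    have hdvd : n ∣ m + q * (t * q) := ⟨t + 1, by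
      have : q * (t * q) = (n + 1) * t := by rw [hn]; ring
      rw [this]; ring_nf; omega⟩
    have hi : t * q ≤ q * (q - 1) := by
      rw [mul_comm q]; exact Nat.mul_le_mul_right q (by omega)
    have horth : ∑ x : Fin n, u x * ω ^ (q * (t * q) * x) = 0 := by
      refine (sum_congr rfl fun x _ => ?_).trans (hu (t * q) hi)
      rw [← pow_mul]; ring_nf
    rw [← hfu, sum_evalPowers_mul_pow hω hf hmn hdvd, hnF] at horth
    simpa using horth
  · exact coeff_eq_zero_of_degree_lt ((mem_degreeLT.mp hf).trans_le (by exact_mod_cast hnm))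

end

theorem fourier_hermitian_dual_containing_mds_general
    {q : ℕ}
    {F : Type*} [Field F] [Fintype F] [DecidableEq F] (hF : Fintype.card F = q ^ 2)
    {n : ℕ} (hn : n = q ^ 2 - 1) {ω : F} (hω : orderOf ω = n)
    (e : ℕ → Fin n → F)
    (he : ∀ (i : ℕ) (j : Fin n), e i j = ω ^ (i * j.val))
    (C : Submodule F (Fin n → F))
    (hC : C = Submodule.span F (Set.range fun s : Fin (q * (q - 1) + 1) => e s.val)) :
    {u : Fin n → F | ∀ v ∈ C, (∑ x, u x * (v x) ^ q) = 0} ⊆ (C : Set (Fin n → F)) ∧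
      Module.finrank F C = q ^ 2 - q + 1 ∧
      ∀ v ∈ C, v ≠ 0 → q - 1 ≤ hammingNorm v := by
  obtain rfl : e = fun i j => ω ^ (i * j.val) := funext fun i => funext (he i)
  have hq : 2 ≤ q := by
    have : 1 < q ^ 2 := hF ▸ Fintype.one_lt_card
    by_contra! h
    interval_cases q <;> simp at this
  have hqq := Nat.sq_eq_mul_sub_one_add q
  have hrows : ∀ i ≤ q * (q - 1), (fun x : Fin n => ω ^ (i * x.val)) ∈ C := fun i hi =>
    hC ▸ Submodule.subset_span ⟨⟨i, by omega⟩, rfl⟩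
  rw [← map_evalPowers_degreeLT] at hC
  subst hC
  refine ⟨fun u hu => mem_map_evalPowers_of_hermitian_orthogonal hF (by omega) hω
    fun i hi => hu _ (hrows i hi), ?_, ?_⟩
  · rw [finrank_map_evalPowers_degreeLT hω (by omega)]
    omega
  · rintro v ⟨f, hf, rfl⟩ hv
    have hf0 : f ≠ 0 := by rintro rfl; exact hv (map_zero _)
    have hdeg := natDegree_lt_of_mem_degreeLT hf hf0
    have hweight := sub_natDegree_le_hammingNorm_evalPowers hω hf0
    omega

/-- Over `GF(q²)` with `n = q² - 1`, the code generated by the consecutive Fourier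
matrix rows `e_0, …, e_{q(q-1)}` is a Hermitian dual-containing
`[q²-1, q²-q+1, q-1]` MDS code. -/
theorem fourier_hermitian_dual_containing_mds
    {q : ℕ} (hq : IsPrimePow q)
    {F : Type*} [Field F] [Fintype F] [DecidableEq F] (hF : Fintype.card F = q ^ 2)
    {n : ℕ} (hn : n = q ^ 2 - 1) {ω : F} (hω : orderOf ω = n)
    (e : ℕ → Fin n → F)
    (he : ∀ (i : ℕ) (j : Fin n), e i j = ω ^ (i * j.val))
    (C : Submodule F (Fin n → F))
    (hC : C = Submodule.span F (Set.range fun s : Fin (q * (q - 1) + 1) => e s.val)) :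
    {u : Fin n → F | ∀ v ∈ C, (∑ x, u x * (v x) ^ q) = 0} ⊆ (C : Set (Fin n → F)) ∧
      Module.finrank F C = q ^ 2 - q + 1 ∧
      ∀ v ∈ C, v ≠ 0 → q - 1 ≤ hammingNorm v :=
  fourier_hermitian_dual_containing_mds_general hF hn hω e he C hC
end
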